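/- arXiv:1111.0235 — 2 statements merged into one kernel-verified Lean document; each statement's English description precedes it below -/
import Mathlib

section
/- Let D = diag(d_1,...,d_m) be diagonal and K_θ = E[M_σ D M_σ^*] with σ Ewens-distributed with parameter θ > 0. Then K_θ = ((θ−1)/(θ+m−1)) D + (Tr(D)/(θ+m−1)) I_m. -/
open Matrix

/-- The number of cycles of `σ` (including fixed points as 1-cycles). -/
def cycleCount {m : ℕ} (σ : Equiv.Perm (Fin m)) : ℕ :=
  (m - σ.support.card) + σ.cycleType.card

/-- The Ewens measure with parameter `θ` on the symmetric group. -/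
noncomputable def ewens {m : ℕ} (θ : ℝ) (σ : Equiv.Perm (Fin m)) : ℝ :=
  θ ^ cycleCount σ / ∏ k ∈ Finset.range m, (θ + k)

/-- The permutation matrix of `σ`, whose `i`-th row is the standard basis vector `e_{σ i}`. -/
def permMat {m : ℕ} (σ : Equiv.Perm (Fin m)) : Matrix (Fin m) (Fin m) ℂ :=
  Matrix.of fun i j => if j = σ i then 1 else 0

/-!
Since `M_σ D M_σ^* = diag (d ∘ σ)`, the claim says that under the Ewens measure `σ i = i` with
probability `θ / (θ + m - 1)` and `σ i = j` with probability `1 / (θ + m - 1)` for each `j ≠ i`.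
Write a permutation of `Fin (n + 1)` as the pair `(σ 0, e)` with `e` a permutation of `Fin n`
(`Equiv.Perm.decomposeFin`). If `σ 0 = 0` then `0` is a new fixed point and `σ` has one more cycle
than `e`; otherwise `σ` is a transposition `(0 p)` times a permutation fixing `0`, which splices
`0` into the cycle of `p`, and the number of cycles does not change. Summing `θ ^ #cycles` over
this decomposition gives the normalisation `∑ θ ^ K(σ) = θ (θ + 1) ⋯ (θ + n)` and the law of
`σ 0`; the number of cycles is a conjugation invariant, so the law of `σ i` is the same.
-/

open Equiv Finset

namespace Equiv.Perm

section NumCycles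

variable {α β : Type*} [Fintype α] [DecidableEq α] [Fintype β] [DecidableEq β]

def numCycles (σ : Perm α) : ℕ :=
  (Fintype.card α - #σ.support) + σ.cycleType.card

@[simp]
theorem numCycles_one : numCycles (1 : Perm α) = Fintype.card α := by
  simp [numCycles]

theorem numCycles_conj (σ τ : Perm α) : numCycles (τ * σ * τ⁻¹) = numCycles σ := by
  simp [numCycles, cycleType_conj]

theorem IsCycle.numCycles {c : Perm α} (hc : c.IsCycle) :
    c.numCycles = Fintype.card α - #c.support + 1 := by
  simp [Perm.numCycles, hc.cycleType]

theorem Disjoint.numCycles_mul {σ τ : Perm α} (h : σ.Disjoint τ) :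
    (σ * τ).numCycles + Fintype.card α = σ.numCycles + τ.numCycles := by
  have hcard : #σ.support + #τ.support ≤ Fintype.card α := by
    rw [← card_union_of_disjoint (disjoint_iff_disjoint_support.1 h)]
    exact card_le_univ _
  simp only [Perm.numCycles, h.cycleType_mul, h.card_support_mul, Multiset.card_add]
  omega

theorem IsCycle.numCycles_swap_mul {c : Perm α} (hc : c.IsCycle) {x : α} (hx : c x ≠ x) :
    (swap x (c x) * c).numCycles = c.numCycles + 1 := by
  have hcard := card_le_univ c.support
  by_cases hcx : c (c x) = x
  · have hswap : swap x (c x) * c = 1 := by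
      nth_rewrite 2 [hc.eq_swap_of_apply_apply_eq_self hx hcx]
      exact swap_mul_self _ _
    have htwo : #c.support = 2 := by
      rw [hc.eq_swap_of_apply_apply_eq_self hx hcx, card_support_swap hx.symm]
    rw [hswap, numCycles_one, hc.numCycles]
    omega
  · have hsupp : #(swap x (c x) * c).support = #c.support - 1 := by
      rw [support_swap_mul_eq c x hcx, card_sdiff_of_subset (by simpa using hx), card_singleton]
    rw [(hc.swap_mul hx hcx).numCycles, hc.numCycles, hsupp]
    have := hc.two_le_card_support
    omega

theorem numCycles_swap_mul {σ : Perm α} {x : α} (hx : σ x ≠ x) :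
    (swap x (σ x) * σ).numCycles = σ.numCycles + 1 := by
  -- The transposition acts inside the cycle `c` of `x`, so only the factor `c` of `σ` changes.
  set c := σ.cycleOf x
  have hc : c.IsCycle := isCycle_cycleOf σ hx
  have hcx : c x = σ x := cycleOf_apply_self σ x
  have hdisj : (σ * c⁻¹).Disjoint c := disjoint_mul_inv_of_mem_cycleFactorsFinset
    (cycleOf_mem_cycleFactorsFinset_iff.2 (mem_support.2 hx))
  have hxc : x ∈ c.support := mem_support.2 (by rwa [hcx])
  have hswap : (swap x (c x)).support ≤ c.support := by
    rw [support_swap (mem_support.1 hxc).symm]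
    exact insert_subset hxc (singleton_subset_iff.2 (apply_mem_support.2 hxc))
  have hcomm : Commute (σ * c⁻¹) (swap x (c x)) := (hdisj.mono le_rfl hswap).commute
  have hdisj' : (σ * c⁻¹).Disjoint (swap x (c x) * c) :=
    hdisj.mono le_rfl ((support_mul_le _ _).trans (sup_le hswap le_rfl))
  have hsplit : swap x (σ x) * σ = σ * c⁻¹ * (swap x (c x) * c) := by
    rw [← hcx, ← mul_assoc, hcomm.eq, mul_assoc (swap x (c x)), inv_mul_cancel_right]
  have h₁ := hdisj.numCycles_mul
  have h₂ := hdisj'.numCycles_mul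
  rw [inv_mul_cancel_right] at h₁
  rw [hsplit, hc.numCycles_swap_mul (hcx ▸ hx)] at *
  omega

theorem numCycles_swap_mul_of_apply_eq_self {σ : Perm α} {a b : α} (ha : σ a = a)
    (hab : a ≠ b) : (swap a b * σ).numCycles + 1 = σ.numCycles := by
  have hb : (swap a b * σ) a = b := by simp [ha]
  have hne : (swap a b * σ) a ≠ a := by rw [hb]; exact hab.symm
  have := numCycles_swap_mul hne
  rwa [hb, ← mul_assoc, swap_mul_self, one_mul, eq_comm] at this

theorem numCycles_extendDomain {p : β → Prop} [DecidablePred p] (σ : Perm α)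
    (f : α ≃ Subtype p) :
    (σ.extendDomain f).numCycles + Fintype.card α = σ.numCycles + Fintype.card β := by
  have h₁ := card_le_univ σ.support
  have h₂ : Fintype.card α ≤ Fintype.card β :=
    Fintype.card_le_of_embedding (f.toEmbedding.trans (Function.Embedding.subtype p))
  simp only [Perm.numCycles, cycleType_extendDomain, card_support_extend_domain]
  omega

end NumCycles

theorem decomposeFin_symm_zero {n : ℕ} (e : Perm (Fin n)) :
    decomposeFin.symm (0, e) = e.extendDomain (finSuccAboveEquiv 0) := by
  refine Equiv.ext fun x => Fin.cases ?_ (fun i => ?_) x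
  · rw [decomposeFin_symm_apply_zero, extendDomain_apply_not_subtype _ _ (by simp)]
  · have h := extendDomain_apply_image e (finSuccAboveEquiv 0) i
    simp only [finSuccAboveEquiv_apply, Fin.succAbove_zero] at h
    simp [h]

theorem decomposeFin_symm_eq_swap_mul {n : ℕ} (p : Fin (n + 1)) (e : Perm (Fin n)) :
    decomposeFin.symm (p, e) = swap 0 p * decomposeFin.symm (0, e) := by
  ext x
  refine Fin.cases ?_ (fun i => ?_) x <;> simp

theorem numCycles_decomposeFin_symm {n : ℕ} (p : Fin (n + 1)) (e : Perm (Fin n)) :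
    (decomposeFin.symm (p, e)).numCycles = e.numCycles + if p = 0 then 1 else 0 := by
  have hzero : (decomposeFin.symm (0, e)).numCycles = e.numCycles + 1 := by
    have := numCycles_extendDomain e (finSuccAboveEquiv (0 : Fin (n + 1)))
    rw [← decomposeFin_symm_zero, Fintype.card_fin, Fintype.card_fin] at this
    omega
  split_ifs with hp
  · rwa [hp]
  · have := numCycles_swap_mul_of_apply_eq_self (decomposeFin_symm_apply_zero 0 e) (Ne.symm hp)
    rw [← decomposeFin_symm_eq_swap_mul, hzero] at this
    omega

section Sums

variable {R : Type*} [CommRing R] (θ : R)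

theorem sum_pow_numCycles_mul_apply_zero {n : ℕ} (f : Fin (n + 1) → R) :
    ∑ σ : Perm (Fin (n + 1)), θ ^ σ.numCycles * f (σ 0)
      = (∑ e : Perm (Fin n), θ ^ e.numCycles) * ((θ - 1) * f 0 + ∑ p, f p) := by
  have hweight : ∀ p : Fin (n + 1),
      θ ^ (if p = 0 then 1 else 0) * f p = f p + if p = 0 then (θ - 1) * f 0 else 0 := by
    intro p
    split_ifs with hp
    · rw [hp]; ring
    · ring
  rw [← decomposeFin.symm.sum_comp, Fintype.sum_prod_type, sum_comm]
  simp only [numCycles_decomposeFin_symm, decomposeFin_symm_apply_zero, pow_add, mul_assoc,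
    ← mul_sum, hweight, sum_add_distrib, sum_ite_eq', mem_univ, if_true, ← sum_mul]
  ring

theorem sum_pow_numCycles :
    ∀ n : ℕ, ∑ σ : Perm (Fin n), θ ^ σ.numCycles = ∏ k ∈ range n, (θ + k)
  | 0 => by simp [Perm.numCycles]
  | n + 1 => by
    have := sum_pow_numCycles_mul_apply_zero θ (fun _ : Fin (n + 1) => (1 : R))
    simp only [mul_one, sum_const, card_univ, Fintype.card_fin, nsmul_eq_mul] at this
    rw [this, sum_pow_numCycles n, prod_range_succ]
    push_cast
    ring

theorem sum_pow_numCycles_mul_apply {n : ℕ} (i : Fin (n + 1)) (f : Fin (n + 1) → R) :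
    ∑ σ : Perm (Fin (n + 1)), θ ^ σ.numCycles * f (σ i)
      = (∏ k ∈ range n, (θ + k)) * ((θ - 1) * f i + ∑ j, f j) := by
  set τ := swap 0 i
  have hτ : τ⁻¹ i = 0 := by simp [τ]
  rw [← (MulAut.conj τ).toEquiv.sum_comp]
  simp only [MulEquiv.toEquiv_eq_coe, MulEquiv.coe_toEquiv, MulAut.conj_apply, numCycles_conj,
    mul_apply, hτ]
  have := sum_pow_numCycles_mul_apply_zero θ (f ∘ τ)
  simp only [Function.comp_apply, sum_pow_numCycles, Equiv.sum_comp τ f] at this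
  rwa [swap_apply_left] at this

end Sums

end Equiv.Perm

open Equiv.Perm

theorem cycleCount_eq_numCycles {m : ℕ} (σ : Equiv.Perm (Fin m)) :
    cycleCount σ = σ.numCycles := by
  simp [cycleCount, numCycles]

theorem sum_ewens_mul_apply {θ : ℝ} (hθ : 0 < θ) {n : ℕ} (i : Fin (n + 1))
    (f : Fin (n + 1) → ℂ) :
    ∑ σ : Equiv.Perm (Fin (n + 1)), (ewens θ σ : ℂ) * f (σ i)
      = ((θ - 1) / (θ + n) : ℝ) * f i + (1 / (θ + n) : ℝ) * ∑ j, f j := by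
  have hprod : (∏ k ∈ range n, ((θ : ℂ) + k)) ≠ 0 :=
    prod_ne_zero_iff.2 fun k _ => by exact_mod_cast (by positivity : θ + k ≠ 0)
  have hlast : (θ : ℂ) + n ≠ 0 := by exact_mod_cast (by positivity : θ + n ≠ 0)
  simp only [ewens, cycleCount_eq_numCycles, Complex.ofReal_div, Complex.ofReal_pow,
    Complex.ofReal_add, Complex.ofReal_natCast, div_mul_eq_mul_div, ← sum_div,
    sum_pow_numCycles_mul_apply, prod_range_succ]
  push_cast
  field_simp

theorem permMat_eq_permMatrix {m : ℕ} (σ : Equiv.Perm (Fin m)) :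
    permMat σ = σ.permMatrix ℂ := by
  ext i j
  simp [permMat, PEquiv.toMatrix_apply, eq_comm]

theorem permMat_mul_diagonal_mul_conjTranspose {m : ℕ} (σ : Equiv.Perm (Fin m))
    (d : Fin m → ℂ) : permMat σ * diagonal d * (permMat σ)ᴴ = diagonal (d ∘ σ) := by
  rw [permMat_eq_permMatrix, conjTranspose_permMatrix, PEquiv.toMatrix_toPEquiv_mul,
    PEquiv.mul_toMatrix_toPEquiv, submatrix_submatrix, Equiv.Perm.inv_def, Equiv.symm_symm]
  exact submatrix_diagonal_equiv d σ

theorem stmt_8 {m : ℕ} (θ : ℝ) (hθ : 0 < θ) (d : Fin m → ℂ) :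
    (∑ σ : Equiv.Perm (Fin m), ewens θ σ • (permMat σ * Matrix.diagonal d * (permMat σ)ᴴ))
      = (((θ - 1) / (θ + m - 1) : ℝ) : ℂ) • Matrix.diagonal d
        + ((1 / (θ + m - 1) : ℝ) : ℂ) • (Matrix.diagonal d).trace • (1 : Matrix (Fin m) (Fin m) ℂ) := by
  rcases m with _ | n
  · exact Subsingleton.elim _ _
  rw [show θ + ((n + 1 : ℕ) : ℝ) - 1 = θ + n by push_cast; ring]
  simp only [permMat_mul_diagonal_mul_conjTranspose, trace_diagonal]
  ext i j
  rcases eq_or_ne i j with rfl | hij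
  · simpa [Matrix.sum_apply, Complex.real_smul] using sum_ewens_mul_apply hθ i d
  · simp [Matrix.sum_apply, diagonal_apply_ne _ hij, one_apply_ne hij]
end

section
/- Let D = diag(d_1,...,d_p, 0,...,0) be an m×m diagonal matrix whose first p entries d_1,...,d_p are nonzero. Then E[V_σ^T (V_σ D V_σ^T)^+ V_σ] = (p/(θ+m−1)) D^+ + ((θ−1)/(θ+m−1)) diag(d_1^{-1},...,d_p^{-1},0,...,0), where the expectation is over random injections σ ∈ S_{p,m} with the measure μ_{θ,m,p} induced by the Ewens measure, and X^+ denotes the Moore–Penrose pseudoinverse. -/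
open Matrix

/-- The measure on injections `{1,…,p} → {1,…,m}`: the Ewens probability of the set of
permutations of `{1,…,m}` whose restriction to `{1,…,p}` equals `σ`. -/
noncomputable def extMeasure {p m : ℕ} (h : p ≤ m) (θ : ℝ) (σ : Fin p ↪ Fin m) : ℝ :=
  ∑ τ ∈ Finset.univ.filter
      (fun τ : Equiv.Perm (Fin m) => ∀ i : Fin p, τ (Fin.castLE h i) = σ i),
    ewens θ τ

/-- The `p × m` matrix whose `i`-th row is the standard basis row vector `e_{σ i}`. -/
def Vmat {p m : ℕ} (σ : Fin p ↪ Fin m) : Matrix (Fin p) (Fin m) ℂ :=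
  Matrix.of fun i j => if j = σ i then 1 else 0

/-- The Moore–Penrose pseudoinverse of a complex square matrix, defined (noncomputably) as
the matrix satisfying the four Penrose conditions. -/
noncomputable def pinv {p : ℕ} (W : Matrix (Fin p) (Fin p) ℂ) : Matrix (Fin p) (Fin p) ℂ :=
  Classical.epsilon fun X : Matrix (Fin p) (Fin p) ℂ =>
    W * X * W = W ∧ X * W * X = X ∧ (W * X)ᴴ = W * X ∧ (X * W)ᴴ = X * W

/-! Since `V_σ D V_σᵀ = diag(d ∘ σ)` and the pseudoinverse of a diagonal matrix inverts its nonzero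
entries, each summand is `D⁺` cut down to the coordinates in the range of `σ`. The expectation is
therefore diagonal, with entries `P(j ∈ range σ) d_j⁻¹`, and `P(j ∈ range σ) = ∑_{i < p} P(τ i = j)`
for an Ewens-distributed permutation `τ`. Multiplying by the transposition `(a b)` cuts `a` out of
its cycle, so it matches the permutations with `τ a = b` with those fixing `a`, at the cost of one
cycle; together with `∑_τ θ^{cycles τ} = θ (θ + 1) ⋯ (θ + m - 1)` this gives
`P(τ a = b) = (if a = b then θ else 1) / (θ + m - 1)`. -/

open Equiv Equiv.Perm Finset

section CycleCount

variable {m : ℕ}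

theorem Equiv.Perm.Disjoint.cycleCount_mul {f g : Perm (Fin m)} (h : f.Disjoint g) :
    cycleCount (f * g) + m = cycleCount f + cycleCount g := by
  have hsupp := h.card_support_mul
  have hle : #(f * g).support ≤ m := by simpa using card_le_univ (f * g).support
  simp only [cycleCount, h.cycleType_mul, Multiset.card_add]
  omega

theorem Equiv.Perm.IsCycle.cycleCount_add_card_support {c : Perm (Fin m)} (hc : c.IsCycle) :
    cycleCount c + #c.support = m + 1 := by
  have hle : #c.support ≤ m := by simpa using card_le_univ c.support
  simp only [cycleCount, hc.cycleType, Multiset.card_singleton]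
  omega

theorem cycleCount_one : cycleCount (1 : Perm (Fin m)) = m := by
  simp [cycleCount]

theorem Equiv.Perm.IsCycle.cycleCount_swap_mul {c : Perm (Fin m)} (hc : c.IsCycle) {a : Fin m}
    (ha : c a ≠ a) : cycleCount (swap a (c a) * c) = cycleCount c + 1 := by
  have hcount := hc.cycleCount_add_card_support
  by_cases hc2 : c (c a) = a
  · have hswap : c = swap a (c a) := hc.eq_swap_of_apply_apply_eq_self ha hc2
    have hcard : #c.support = 2 := by rw [hswap]; exact card_support_swap ha.symm
    have hone : swap a (c a) * c = 1 := by nth_rewrite 2 [hswap]; exact swap_mul_self _ _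
    rw [hone, cycleCount_one]
    omega
  · have hcard : #(swap a (c a) * c).support + 1 = #c.support := by
      rw [support_swap_mul_eq c a hc2, card_sdiff_of_subset (by simpa using ha)]
      have := hc.two_le_card_support
      simp only [card_singleton]
      omega
    have := (hc.swap_mul ha hc2).cycleCount_add_card_support
    omega

theorem cycleCount_swap_apply_mul {g : Perm (Fin m)} {a : Fin m} (ha : g a ≠ a) :
    cycleCount (swap a (g a) * g) = cycleCount g + 1 := by
  set c := g.cycleOf a
  have hc : c.IsCycle := isCycle_cycleOf g ha
  have hca : c a = g a := g.cycleOf_apply_self a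
  have hdisj : (g * c⁻¹).Disjoint c :=
    disjoint_mul_inv_of_mem_cycleFactorsFinset (cycleOf_mem_cycleFactorsFinset_iff.mpr
      (mem_support.mpr ha))
  have hswap : (g * c⁻¹).Disjoint (swap a (c a)) := by
    refine hdisj.mono le_rfl ?_
    rw [support_swap (hca ▸ ha).symm]
    intro x hx
    simp only [mem_insert, mem_singleton] at hx
    rcases hx with rfl | rfl
    · exact mem_support.mpr (hca ▸ ha)
    · exact apply_mem_support.mpr (mem_support.mpr (hca ▸ ha))
  have hg : g = g * c⁻¹ * c := by group
  have hsplit : swap a (g a) * g = g * c⁻¹ * (swap a (c a) * c) :=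
    calc swap a (g a) * g = swap a (c a) * (g * c⁻¹) * c := by rw [hca, mul_assoc, ← hg]
      _ = g * c⁻¹ * (swap a (c a) * c) := by rw [← hswap.commute.eq, mul_assoc]
  have hafter := (hswap.mul_right hdisj).cycleCount_mul
  have hbefore := hdisj.cycleCount_mul
  rw [← hg] at hbefore
  rw [hsplit]
  have := hc.cycleCount_swap_mul (hca ▸ ha)
  omega

end CycleCount

section CycleCountSums

variable {M : Type*} [AddCommMonoid M]

theorem cycleCount_extendDomain {n : ℕ} {a : Fin (n + 1)}
    (e : Fin n ≃ {x : Fin (n + 1) // x ≠ a}) (π : Perm (Fin n)) :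
    cycleCount (π.extendDomain e) = cycleCount π + 1 := by
  have hle : #π.support ≤ n := by simpa using card_le_univ π.support
  simp only [cycleCount, cycleType_extendDomain, card_support_extend_domain]
  omega

theorem sum_filter_apply_eq_self_cycleCount {n : ℕ} (a : Fin (n + 1)) (f : ℕ → M) :
    ∑ τ ∈ univ.filter (fun τ : Perm (Fin (n + 1)) => τ a = a), f (cycleCount τ)
      = ∑ π : Perm (Fin n), f (cycleCount π + 1) := by
  let e := finSuccAboveEquiv a
  rw [sum_subtype _ (p := fun τ : Perm (Fin (n + 1)) => ∀ x, ¬x ≠ a → τ x = x) (by simp),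
    ← (permCongr e).trans (Perm.subtypeEquivSubtypePerm _) |>.sum_comp]
  refine sum_congr rfl fun π _ => ?_
  have hext : ((permCongr e).trans (Perm.subtypeEquivSubtypePerm _) π : Perm (Fin (n + 1)))
      = π.extendDomain e := by
    ext x : 1
    by_cases hx : x = a
    · subst hx
      simp [ofSubtype_apply_of_not_mem, extendDomain_apply_not_subtype]
    · rw [extendDomain_apply_subtype _ e hx]
      simp [ofSubtype_apply_of_mem (p := (· ≠ a)) _ hx]
  rw [hext, cycleCount_extendDomain]

theorem sum_filter_apply_eq_cycleCount {m : ℕ} {a b : Fin m} (hb : b ≠ a) (f : ℕ → M) :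
    ∑ τ ∈ univ.filter (fun τ : Perm (Fin m) => τ a = b), f (cycleCount τ + 1)
      = ∑ τ ∈ univ.filter (fun τ : Perm (Fin m) => τ a = a), f (cycleCount τ) := by
  refine sum_nbij' (swap a b * ·) (swap a b * ·) ?_ ?_ ?_ ?_ ?_
  · intro τ hτ
    simp_all
  · intro τ hτ
    simp_all
  · intro τ _
    simp [← mul_assoc]
  · intro τ _
    simp [← mul_assoc]
  · intro τ hτ
    simp only [mem_filter, mem_univ, true_and] at hτ
    have := cycleCount_swap_apply_mul (g := τ) (a := a) (hτ ▸ hb)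
    rw [hτ] at this
    rw [this]

end CycleCountSums

section Ewens

theorem sum_filter_apply_eq_pow_cycleCount {R : Type*} [CommSemiring R] (θ : R) {n : ℕ}
    (a b : Fin (n + 1)) :
    ∑ τ ∈ univ.filter (fun τ : Perm (Fin (n + 1)) => τ a = b), θ ^ cycleCount τ
      = (if b = a then θ else 1) * ∑ π : Perm (Fin n), θ ^ cycleCount π := by
  split_ifs with hb
  · rw [hb, sum_filter_apply_eq_self_cycleCount a fun k => θ ^ k, mul_sum]
    simp only [pow_succ, mul_comm]
  · simpa [sum_filter_apply_eq_self_cycleCount a fun k => θ ^ (k - 1)] using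
      sum_filter_apply_eq_cycleCount hb fun k => θ ^ (k - 1)

theorem sum_pow_cycleCount {R : Type*} [CommSemiring R] (θ : R) (n : ℕ) :
    ∑ τ : Perm (Fin n), θ ^ cycleCount τ = ∏ k ∈ range n, (θ + k) := by
  induction n with
  | zero => simp [cycleCount]
  | succ n ih =>
    rw [← sum_fiberwise univ (fun τ : Perm (Fin (n + 1)) => τ 0), prod_range_succ, ← ih]
    simp only [sum_filter_apply_eq_pow_cycleCount, ← sum_mul, Fin.sum_univ_succ,
      Fin.succ_ne_zero, if_true, if_false, sum_const, card_univ, Fintype.card_fin, nsmul_one]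
    exact mul_comm _ _

theorem sum_filter_apply_eq_ewens {m : ℕ} {θ : ℝ} (hθ : 0 < θ) (a b : Fin m) :
    ∑ τ ∈ univ.filter (fun τ : Perm (Fin m) => τ a = b), ewens θ τ
      = (if b = a then θ else 1) / (θ + m - 1) := by
  obtain ⟨n, rfl⟩ := Nat.exists_eq_add_one_of_ne_zero a.pos.ne'
  have hprod : 0 < ∏ k ∈ range n, (θ + k) := prod_pos fun k _ => by positivity
  simp only [ewens, ← sum_div, sum_filter_apply_eq_pow_cycleCount, sum_pow_cycleCount,
    prod_range_succ]
  rw [mul_comm, mul_div_mul_left _ _ hprod.ne']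
  push_cast
  ring

end Ewens

theorem Function.Embedding.indicator_range_apply {ι κ M : Type*} [Fintype ι] [DecidableEq κ]
    [AddCommMonoid M] (σ : ι ↪ κ) (g : κ → M) (j : κ) :
    (Set.range σ).indicator g j = ∑ i, if σ i = j then g j else 0 := by
  rcases em (j ∈ Set.range σ) with ⟨i₀, rfl⟩ | hj
  · rw [Set.indicator_of_mem (Set.mem_range_self i₀),
      sum_eq_single i₀ (fun i _ hi => if_neg (σ.injective.ne hi)) (by simp), if_pos rfl]
  · rw [Set.indicator_of_notMem hj]
    exact (sum_eq_zero fun i _ => if_neg fun hi => hj ⟨i, hi⟩).symm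

section Restriction

variable {p m : ℕ} (h : p ≤ m)

def Equiv.Perm.restrictFin (τ : Perm (Fin m)) : Fin p ↪ Fin m :=
  (Fin.castLEEmb h).trans τ.toEmbedding

theorem extMeasure_eq_sum_filter_restrictFin (θ : ℝ) (σ : Fin p ↪ Fin m) :
    extMeasure h θ σ
      = ∑ τ ∈ univ.filter (fun τ : Perm (Fin m) => τ.restrictFin h = σ), ewens θ τ := by
  simp [extMeasure, restrictFin, DFunLike.ext_iff]

theorem sum_extMeasure_smul {M : Type*} [AddCommMonoid M] [Module ℝ M] (θ : ℝ)
    (f : (Fin p ↪ Fin m) → M) :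
    ∑ σ, extMeasure h θ σ • f σ = ∑ τ : Perm (Fin m), ewens θ τ • f (τ.restrictFin h) := by
  simp_rw [extMeasure_eq_sum_filter_restrictFin, sum_smul]
  rw [← sum_fiberwise univ (restrictFin h) fun τ => ewens θ τ • f (τ.restrictFin h)]
  exact sum_congr rfl fun σ _ => sum_congr rfl fun τ hτ => by rw [(mem_filter.1 hτ).2]

end Restriction

theorem sum_ite_castLE_eq {p m : ℕ} (h : p ≤ m) (θ : ℝ) (j : Fin m) :
    ∑ i : Fin p, (if j = Fin.castLE h i then θ else 1) = p + if (j : ℕ) < p then θ - 1 else 0 := by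
  have hsplit : ∀ i : Fin p, (if j = Fin.castLE h i then θ else 1)
      = 1 + if Fin.castLEEmb h i = j then θ - 1 else 0 := fun i => by
    rw [Fin.coe_castLEEmb]
    split_ifs <;> simp_all
  rw [sum_congr rfl fun i _ => hsplit i, sum_add_distrib,
    ← Function.Embedding.indicator_range_apply (Fin.castLEEmb h) (fun _ => θ - 1),
    Fin.coe_castLEEmb, Fin.range_castLE]
  simp [Set.indicator_apply]

theorem sum_extMeasure_smul_indicator_range {p m : ℕ} (h : p ≤ m) {θ : ℝ} (hθ : 0 < θ)
    {M : Type*} [AddCommMonoid M] [Module ℝ M] (g : Fin m → M) (j : Fin m) :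
    ∑ σ, extMeasure h θ σ • (Set.range σ).indicator g j
      = ((p + if (j : ℕ) < p then θ - 1 else 0) / (θ + m - 1)) • g j := by
  simp_rw [sum_extMeasure_smul, Function.Embedding.indicator_range_apply, smul_sum]
  rw [sum_comm]
  simp_rw [smul_ite, smul_zero, ← sum_filter, ← sum_smul]
  simp [restrictFin, sum_filter_apply_eq_ewens hθ, ← sum_div, sum_ite_castLE_eq]

section Penrose

variable {m n R : Type*} [Fintype m] [Fintype n] [Semiring R] [StarRing R]

def IsPenroseInverse (W : Matrix m n R) (X : Matrix n m R) : Prop :=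
  W * X * W = W ∧ X * W * X = X ∧ (W * X)ᴴ = W * X ∧ (X * W)ᴴ = X * W

theorem IsPenroseInverse.unique {W : Matrix m n R} {X Y : Matrix n m R}
    (hX : IsPenroseInverse W X) (hY : IsPenroseInverse W Y) : X = Y := by
  obtain ⟨hX₁, hX₂, hX₃, hX₄⟩ := hX
  obtain ⟨hY₁, hY₂, hY₃, hY₄⟩ := hY
  have hWX : W * X = W * Y :=
    calc W * X = W * Y * W * X := by rw [hY₁]
      _ = (W * Y)ᴴ * (W * X)ᴴ := by rw [hY₃, hX₃]; simp only [Matrix.mul_assoc]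
      _ = (W * X * W * Y)ᴴ := by rw [← conjTranspose_mul]; simp only [Matrix.mul_assoc]
      _ = W * Y := by rw [hX₁, hY₃]
  have hXW : X * W = Y * W :=
    calc X * W = X * (W * Y * W) := by rw [hY₁]
      _ = (X * W)ᴴ * (Y * W)ᴴ := by rw [hX₄, hY₄]; simp only [Matrix.mul_assoc]
      _ = (Y * (W * X * W))ᴴ := by rw [← conjTranspose_mul]; simp only [Matrix.mul_assoc]
      _ = Y * W := by rw [hX₁, hY₄]
  calc X = X * W * X := hX₂.symm
    _ = X * (W * Y) := by rw [Matrix.mul_assoc, hWX]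
    _ = Y * W * Y := by rw [← Matrix.mul_assoc, hXW]
    _ = Y := hY₂

end Penrose

theorem pinv_eq_of_isPenroseInverse {p : ℕ} {W X : Matrix (Fin p) (Fin p) ℂ}
    (hX : IsPenroseInverse W X) : pinv W = X :=
  (Classical.epsilon_spec (p := IsPenroseInverse W) ⟨X, hX⟩).unique hX

theorem isPenroseInverse_diagonal {n K : Type*} [Fintype n] [DecidableEq n] [Field K]
    [StarRing K] (w : n → K) :
    IsPenroseInverse (diagonal w) (diagonal fun i => (w i)⁻¹) := by
  have hproj : ∀ x : K, star (x * x⁻¹) = x * x⁻¹ := fun x => by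
    rcases eq_or_ne x 0 with hx | hx <;> simp [hx]
  refine ⟨?_, ?_, ?_, ?_⟩ <;>
    simp only [diagonal_mul_diagonal, diagonal_conjTranspose, mul_inv_mul_cancel]
  · exact congrArg diagonal (funext fun i => by simpa using mul_inv_mul_cancel (w i)⁻¹)
  · exact congrArg diagonal (funext fun i => hproj (w i))
  · exact congrArg diagonal (funext fun i => by simpa [mul_comm] using hproj (w i))

theorem pinv_diagonal {p : ℕ} (w : Fin p → ℂ) :
    pinv (diagonal w) = diagonal fun i => (w i)⁻¹ :=
  pinv_eq_of_isPenroseInverse (isPenroseInverse_diagonal w)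

theorem Vmat_eq_submatrix_one {p m : ℕ} (σ : Fin p ↪ Fin m) :
    Vmat σ = (1 : Matrix (Fin m) (Fin m) ℂ).submatrix σ (Equiv.refl _) := by
  ext i j
  simp [Vmat, Matrix.one_apply, eq_comm]

theorem Vmat_mul_diagonal_mul_transpose {p m : ℕ} (σ : Fin p ↪ Fin m) (d : Fin m → ℂ) :
    Vmat σ * diagonal d * (Vmat σ)ᵀ = diagonal fun i => d (σ i) := by
  rw [Vmat_eq_submatrix_one, transpose_submatrix, transpose_one, one_submatrix_mul,
    mul_submatrix_one]
  simp

theorem transpose_Vmat_mul_diagonal_mul_Vmat {p m : ℕ} (σ : Fin p ↪ Fin m) (g : Fin m → ℂ) :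
    (Vmat σ)ᵀ * diagonal (fun i => g (σ i)) * Vmat σ = diagonal ((Set.range σ).indicator g) := by
  ext j k
  simp only [Matrix.mul_apply, transpose_apply, Vmat, of_apply, diagonal_apply]
  rcases em (j ∈ Set.range σ) with ⟨i₀, rfl⟩ | hj
  · rw [sum_eq_single i₀ (fun i _ hi => by simp [hi.symm]) (by simp)]
    simp [eq_comm]
  · have hj' : ∀ i, j ≠ σ i := fun i hi => hj ⟨i, hi.symm⟩
    simp [hj', Set.indicator_of_notMem hj]

theorem stmt_14_general {p m : ℕ} (h : p ≤ m) (θ : ℝ) (hθ : 0 < θ) (d : Fin m → ℂ) :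
    (∑ σ : Fin p ↪ Fin m,
        extMeasure h θ σ •
          ((Vmat σ)ᵀ * pinv (Vmat σ * Matrix.diagonal d * (Vmat σ)ᵀ) * Vmat σ))
      = ((p / (θ + m - 1) : ℝ) : ℂ) • Matrix.diagonal (fun i => (d i)⁻¹)
        + (((θ - 1) / (θ + m - 1) : ℝ) : ℂ) •
            Matrix.diagonal (fun i : Fin m => if (i : ℕ) < p then (d i)⁻¹ else 0) := by
  have hsummand : ∀ σ : Fin p ↪ Fin m,
      (Vmat σ)ᵀ * pinv (Vmat σ * diagonal d * (Vmat σ)ᵀ) * Vmat σ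
        = diagonal ((Set.range σ).indicator fun j => (d j)⁻¹) := fun σ => by
    rw [Vmat_mul_diagonal_mul_transpose, pinv_diagonal,
      transpose_Vmat_mul_diagonal_mul_Vmat σ fun j => (d j)⁻¹]
  simp only [hsummand]
  ext j k
  rcases eq_or_ne j k with rfl | hjk
  · simp only [Matrix.sum_apply, Matrix.smul_apply, Matrix.add_apply, diagonal_apply_eq,
      sum_extMeasure_smul_indicator_range h hθ]
    split_ifs <;> simp only [Complex.real_smul] <;> push_cast <;> ring
  · simp [Matrix.sum_apply, diagonal_apply_ne _ hjk]

theorem stmt_14 {p m : ℕ} (h : p ≤ m) (θ : ℝ) (hθ : 0 < θ) (d : Fin m → ℂ)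
    (hd₁ : ∀ i : Fin m, (i : ℕ) < p → d i ≠ 0)
    (hd₂ : ∀ i : Fin m, p ≤ (i : ℕ) → d i = 0) :
    (∑ σ : Fin p ↪ Fin m,
        extMeasure h θ σ •
          ((Vmat σ)ᵀ * pinv (Vmat σ * Matrix.diagonal d * (Vmat σ)ᵀ) * Vmat σ))
      = ((p / (θ + m - 1) : ℝ) : ℂ) • Matrix.diagonal (fun i => (d i)⁻¹)
        + (((θ - 1) / (θ + m - 1) : ℝ) : ℂ) •
            Matrix.diagonal (fun i : Fin m => if (i : ℕ) < p then (d i)⁻¹ else 0) :=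
  stmt_14_general h θ hθ d
end
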